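/- arXiv:2211.01448 — 2 statements merged into one kernel-verified Lean document; each statement's English description precedes it below -/
import Mathlib

section
/- Let K ⊂ ℝ^d be compact and let ν_N, η_N be finite Borel measures on ℝ^d converging narrowly to ν and η respectively. Suppose that for every N and every set C ⊆ ℝ^d, ν_N(C̄ + K) ≥ η_N(C), where C̄ denotes the closure of C and + the Minkowski sum. Then ν(C̄ + K) ≥ η(C) for every set C ⊆ ℝ^d. -/
/-!
Test `η` against the thickened indicator `f` of `C̄`, a bounded continuous function squeezed
between the indicators of `C̄` and of its closed `δ`-thickening. As `(C̄)_δ + K ⊆ (C̄ + K)_δ`,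
the hypothesis applied to `(C̄)_δ` gives `∫ f dη_N ≤ ν_N((C̄ + K)_δ)`. Narrow convergence of
`η_N` on the left and the portmanteau inequality for the closed set `(C̄ + K)_δ` on the right
yield `η(C̄) ≤ ν((C̄ + K)_δ)`; letting `δ → 0` gives `η(C) ≤ ν(C̄ + K)`, as `C̄ + K` is closed.
-/

open MeasureTheory Filter Metric Topology
open scoped Pointwise

theorem Metric.cthickening_add_subset {E : Type*} [SeminormedAddCommGroup E] (δ : ℝ)
    (s t : Set E) : cthickening δ s + t ⊆ cthickening δ (s + t) := by
  rintro _ ⟨a, ha, b, hb, rfl⟩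
  have htranslate : b +ᵥ s ⊆ s + t := by
    rintro _ ⟨x, hx, rfl⟩
    simpa only [vadd_eq_add, add_comm b x] using Set.add_mem_add hx hb
  calc infEDist (a + b) (s + t) ≤ infEDist (b +ᵥ a) (b +ᵥ s) := by
        rw [vadd_eq_add, add_comm b a]
        exact infEDist_anti htranslate
    _ = infEDist a s := infEDist_vadd b a s
    _ ≤ ENNReal.ofReal δ := ha

section PseudoEMetricSpace

variable {Ω : Type*} [PseudoEMetricSpace Ω] [MeasurableSpace Ω] [OpensMeasurableSpace Ω]

theorem lintegral_thickenedIndicator_le (μ : Measure Ω) {δ : ℝ} (hδ : 0 < δ) (s : Set Ω) :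
    ∫⁻ x, (thickenedIndicator hδ s x : ENNReal) ∂μ ≤ μ (cthickening δ s) := by
  rw [← lintegral_indicator_one isClosed_cthickening.measurableSet]
  refine lintegral_mono fun x => ?_
  by_cases hx : x ∈ cthickening δ s
  · simpa [Set.indicator_of_mem hx] using thickenedIndicator_le_one hδ s x
  · have hx' : x ∉ thickening δ s := fun hmem => hx (thickening_subset_cthickening δ s hmem)
    simp [Set.indicator_of_notMem hx, thickenedIndicator_zero hδ s hx']

theorem FiniteMeasure.measure_le_of_tendsto_of_cthickening_le {ι : Type*} {L : Filter ι}
    [L.NeBot] {μs νs : ι → FiniteMeasure Ω} {μ ν : FiniteMeasure Ω}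
    (hμ : Tendsto μs L (𝓝 μ)) (hν : Tendsto νs L (𝓝 ν)) {s t : Set Ω}
    (hs : MeasurableSet s) (ht : IsClosed t)
    (h : ∀ δ > 0, ∀ᶠ i in L,
      (μs i : Measure Ω) (cthickening δ s) ≤ (νs i : Measure Ω) (cthickening δ t)) :
    (μ : Measure Ω) s ≤ (ν : Measure Ω) t := by
  have hthick : ∀ δ > 0, (μ : Measure Ω) s ≤ (ν : Measure Ω) (cthickening δ t) := by
    intro δ hδ
    let f := thickenedIndicator hδ s
    calc (μ : Measure Ω) s ≤ ∫⁻ x, (f x : ENNReal) ∂(μ : Measure Ω) :=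
          measure_le_lintegral_thickenedIndicator _ hs hδ
      _ = L.limsup fun i => ∫⁻ x, (f x : ENNReal) ∂(μs i : Measure Ω) :=
          (FiniteMeasure.tendsto_iff_forall_lintegral_tendsto.mp hμ f).limsup_eq.symm
      _ ≤ L.limsup fun i => (νs i : Measure Ω) (cthickening δ t) :=
          limsup_le_limsup <| (h δ hδ).mono fun i hi =>
            (lintegral_thickenedIndicator_le _ hδ s).trans hi
      _ ≤ (ν : Measure Ω) (cthickening δ t) :=
          FiniteMeasure.limsup_measure_closed_le_of_tendsto hν isClosed_cthickening
  have hlim := tendsto_measure_cthickening_of_isClosed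
    ⟨1, one_pos, measure_ne_top (ν : Measure Ω) _⟩ ht
  exact ge_of_tendsto (hlim.mono_left (nhdsWithin_le_nhds (s := Set.Ioi 0)))
    (eventually_nhdsWithin_of_forall hthick)

end PseudoEMetricSpace

/-- Local mass preservation passes to narrow limits: if `K` is compact,
`ν_N → ν` and `η_N → η` narrowly, and `ν_N(C̄ + K) ≥ η_N(C)` for every `N` and every set
`C`, then `ν(C̄ + K) ≥ η(C)` for every set `C`. -/
theorem stmt15 (d : ℕ) (K : Set (EuclideanSpace ℝ (Fin d))) (hK : IsCompact K)
    (ν η : ℕ → FiniteMeasure (EuclideanSpace ℝ (Fin d)))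
    (νlim ηlim : FiniteMeasure (EuclideanSpace ℝ (Fin d)))
    (hν : Tendsto ν atTop (nhds νlim)) (hη : Tendsto η atTop (nhds ηlim))
    (h : ∀ N : ℕ, ∀ C : Set (EuclideanSpace ℝ (Fin d)),
      (η N : Measure (EuclideanSpace ℝ (Fin d))) C
        ≤ (ν N : Measure (EuclideanSpace ℝ (Fin d))) (closure C + K)) :
    ∀ C : Set (EuclideanSpace ℝ (Fin d)),
      (ηlim : Measure (EuclideanSpace ℝ (Fin d))) C
        ≤ (νlim : Measure (EuclideanSpace ℝ (Fin d))) (closure C + K) := by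
  intro C
  have hthick : ∀ δ > 0, ∀ᶠ N in atTop,
      (η N : Measure _) (cthickening δ (closure C))
        ≤ (ν N : Measure _) (cthickening δ (closure C + K)) :=
    fun δ _ => Eventually.of_forall fun N => by
      have hN := h N (cthickening δ (closure C))
      rw [isClosed_cthickening.closure_eq] at hN
      exact hN.trans (measure_mono (cthickening_add_subset δ _ K))
  calc (ηlim : Measure _) C ≤ (ηlim : Measure _) (closure C) := measure_mono subset_closure
    _ ≤ (νlim : Measure _) (closure C + K) :=
      FiniteMeasure.measure_le_of_tendsto_of_cthickening_le hη hν isClosed_closure.measurableSet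
        (isClosed_closure.add_right_of_isCompact hK) hthick
end

section
/- Let d ≥ 1, 0 < α ≤ 2, T > 0, M > 0, and let (x_i, v_i)_{i=1}^N be a C¹ non-collisional solution of the Cucker–Smale particle system with communication weight ψ(s) = s^{-α} on [0,T], with |v_i(t)| ≤ M and |x_i(t)| ≤ (T+1)M for all i and t. Let φ ∈ C²(ℝ^{2d}) satisfy ‖φ‖_∞ ≤ 1, ‖∇φ‖_∞ ≤ 1 and have ∇_v φ Lipschitz with constant at most 1. Then for every t ∈ [0,T], |d/dt (1/N) Σ_{i=1}^N φ(x_i(t), v_i(t))| ≤ M + (1/2)(2(T+1)M)^{2−α} + (1/(2N²)) Σ_{i≠j} |v_i(t) − v_j(t)|² |x_i(t) − x_j(t)|^{-α}. -/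
/-!
Differentiating along the flow, `d/dt (1/N) Σ φ(xᵢ, vᵢ)` is `(1/N) Σ ∇ₓφ · vᵢ` (bounded by `M`) plus
the alignment term `(1/N²) Σ_{i≠j} ψᵢⱼ ⟪∇ᵥφ(zᵢ), vⱼ - vᵢ⟫` with `ψᵢⱼ = |xᵢ - xⱼ|^{-α}`. Since `ψ` is
symmetric, swapping `i ↔ j` turns the latter into `-(1/(2N²)) Σ ψᵢⱼ ⟪∇ᵥφ(zᵢ) - ∇ᵥφ(zⱼ), vᵢ - vⱼ⟫`.
As `∇ᵥφ` is 1-Lipschitz on phase space (sup norm on the product), each pair is at most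
`ψᵢⱼ max(|xᵢⱼ|, |vᵢⱼ|) |vᵢⱼ| ≤ ψᵢⱼ (|xᵢⱼ|²/2 + |vᵢⱼ|²) = |xᵢⱼ|^{2-α}/2 + ψᵢⱼ |vᵢⱼ|²`, and
`|xᵢⱼ|^{2-α} ≤ (2(T+1)M)^{2-α}` because `α ≤ 2`.
-/

open Set Finset MeasureTheory

noncomputable section

/-- Phase space `ℝ^d_x × ℝ^d_v`. -/
abbrev Phase (d : ℕ) := (EuclideanSpace ℝ (Fin d)) × (EuclideanSpace ℝ (Fin d))

/-- Velocity gradient `∇ᵥφ` of a function on phase space. -/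
def gradV {d : ℕ} (φ : Phase d → ℝ) (z : Phase d) : EuclideanSpace ℝ (Fin d) :=
  gradient (fun w => φ (z.1, w)) z.2

theorem fderiv_apply_eq_add_inner_gradV {d : ℕ} {φ : Phase d → ℝ} {z : Phase d}
    (hφ : DifferentiableAt ℝ φ z) (u w : EuclideanSpace ℝ (Fin d)) :
    fderiv ℝ φ z (u, w) = fderiv ℝ φ z (u, 0) + inner ℝ (gradV φ z) w := by
  have hslice : HasFDerivAt (fun w => φ (z.1, w))
      ((fderiv ℝ φ z).comp (ContinuousLinearMap.inr ℝ _ _)) z.2 :=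
    hφ.hasFDerivAt.comp z.2 (hasFDerivAt_prodMk_right z.1 z.2)
  rw [gradV, gradient, hslice.fderiv, InnerProductSpace.toDual_symm_apply,
    ContinuousLinearMap.comp_apply, ContinuousLinearMap.inr_apply, ← map_add, Prod.mk_add_mk,
    add_zero, zero_add]

theorem ContinuousLinearMap.abs_apply_mk_zero_le {E F : Type*} [NormedAddCommGroup E]
    [NormedSpace ℝ E] [NormedAddCommGroup F] [NormedSpace ℝ F] (L : E × F →L[ℝ] ℝ) (u : E) :
    |L (u, 0)| ≤ ‖L‖ * ‖u‖ := by
  simpa using L.le_opNorm (u, 0)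

theorem Finset.sum_sum_erase_comm {ι M : Type*} [Fintype ι] [DecidableEq ι] [AddCommMonoid M]
    (f : ι → ι → M) :
    ∑ i, ∑ j ∈ univ.erase i, f i j = ∑ i, ∑ j ∈ univ.erase i, f j i :=
  Finset.sum_comm' (by simp [ne_comm])

theorem max_mul_le_sq_div_two_add_sq (a b : ℝ) : max a b * b ≤ a ^ 2 / 2 + b ^ 2 := by
  rcases le_total a b with h | h
  · rw [max_eq_right h]; nlinarith [sq_nonneg a]
  · rw [max_eq_left h]; nlinarith [sq_nonneg (a - b)]

theorem abs_inv_card_mul_sum_le {ι : Type*} [Fintype ι] {f : ι → ℝ} {M : ℝ} (hM : 0 ≤ M)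
    (hf : ∀ i, |f i| ≤ M) : |(Fintype.card ι : ℝ)⁻¹ * ∑ i, f i| ≤ M := by
  set n : ℝ := (Fintype.card ι : ℝ)
  have hsum : |∑ i, f i| ≤ n * M :=
    (abs_sum_le_sum_abs _ _).trans (by simpa using sum_le_card_nsmul univ _ M fun i _ => hf i)
  calc |n⁻¹ * ∑ i, f i| ≤ n⁻¹ * (n * M) := by
        rw [abs_mul, abs_inv, Nat.abs_cast]; gcongr
    _ = n / n * M := by ring
    _ ≤ M := mul_le_of_le_one_left hM (div_self_le_one n)

section Interaction

variable {ι E F : Type*} [Fintype ι] [DecidableEq ι] [NormedAddCommGroup E]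
  [NormedAddCommGroup F] [InnerProductSpace ℝ F]

theorem two_mul_sum_sum_erase_inner_eq_neg (ψ : ι → ι → ℝ) (hψ : ∀ i j, ψ i j = ψ j i)
    (g u : ι → F) :
    2 * ∑ i, ∑ j ∈ univ.erase i, ψ i j * inner ℝ (g i) (u j - u i)
      = -∑ i, ∑ j ∈ univ.erase i, ψ i j * inner ℝ (g i - g j) (u i - u j) := by
  have hterm : ∀ i j, ψ i j * inner ℝ (g i - g j) (u i - u j)
      = -(ψ i j * inner ℝ (g i) (u j - u i)) - ψ j i * inner ℝ (g j) (u i - u j) := by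
    intro i j
    rw [hψ i j, inner_sub_left, ← neg_sub (u j) (u i), inner_neg_right, neg_sub]
    ring
  have hswap := sum_sum_erase_comm fun i j => ψ i j * inner ℝ (g i) (u j - u i)
  simp only [hterm, sum_sub_distrib, sum_neg_distrib]
  linarith

theorem rpow_neg_mul_abs_inner_le {G : E × F → F} (hG : LipschitzWith 1 G) {x y : E}
    (hxy : x ≠ y) (v w : F) {α C : ℝ} (hα : α ≤ 2) (hC : ‖x - y‖ ≤ C) :
    ‖x - y‖ ^ (-α) * |inner ℝ (G (x, v) - G (y, w)) (v - w)|
      ≤ C ^ (2 - α) / 2 + ‖v - w‖ ^ 2 * ‖x - y‖ ^ (-α) := by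
  set r := ‖x - y‖
  set s := ‖v - w‖
  have hr : 0 < r := norm_pos_iff.mpr (sub_ne_zero.mpr hxy)
  have hG' : ‖G (x, v) - G (y, w)‖ ≤ max r s := by
    simpa [dist_eq_norm, Prod.dist_eq] using hG.dist_le_mul (x, v) (y, w)
  have hinner : |inner ℝ (G (x, v) - G (y, w)) (v - w)| ≤ max r s * s :=
    (abs_real_inner_le_norm _ _).trans (by gcongr)
  have hpow : r ^ (-α) * r ^ 2 = r ^ (2 - α) := by
    rw [← Real.rpow_two, ← Real.rpow_add hr, neg_add_eq_sub]
  calc r ^ (-α) * |inner ℝ (G (x, v) - G (y, w)) (v - w)|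
      ≤ r ^ (-α) * (r ^ 2 / 2 + s ^ 2) := by
        gcongr
        exact hinner.trans (max_mul_le_sq_div_two_add_sq r s)
    _ = r ^ (2 - α) / 2 + s ^ 2 * r ^ (-α) := by rw [← hpow]; ring
    _ ≤ C ^ (2 - α) / 2 + s ^ 2 * r ^ (-α) := by gcongr

theorem Finset.sum_sum_erase_const_le {K : ℝ} (hK : 0 ≤ K) :
    ∑ i : ι, ∑ _j ∈ univ.erase i, K ≤ (Fintype.card ι : ℝ) ^ 2 * K :=
  calc ∑ i : ι, ∑ _j ∈ univ.erase i, K ≤ ∑ _i : ι, ∑ _j : ι, K :=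
        sum_le_sum fun i _ => sum_le_sum_of_subset_of_nonneg (erase_subset _ _) fun _ _ _ => hK
    _ = (Fintype.card ι : ℝ) ^ 2 * K := by simp [sq, mul_assoc]

theorem abs_mean_alignment_le {G : E × F → F} (hG : LipschitzWith 1 G)
    {X : ι → E} (hX : Function.Injective X) (V : ι → F) {α R : ℝ} (hα : α ≤ 2)
    (hR₀ : 0 ≤ R) (hR : ∀ i, ‖X i‖ ≤ R) :
    |(Fintype.card ι : ℝ)⁻¹ * ((Fintype.card ι : ℝ)⁻¹ *
        ∑ i, ∑ j ∈ univ.erase i, ‖X i - X j‖ ^ (-α) * inner ℝ (G (X i, V i)) (V j - V i))|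
      ≤ (2 * R) ^ (2 - α) / 4 + 1 / (2 * (Fintype.card ι : ℝ) ^ 2) *
        ∑ i, ∑ j ∈ univ.erase i, ‖V i - V j‖ ^ 2 * ‖X i - X j‖ ^ (-α) := by
  set n : ℝ := (Fintype.card ι : ℝ)
  set K := (2 * R) ^ (2 - α) / 2 with hK_def
  set Q := ∑ i, ∑ j ∈ univ.erase i, ‖V i - V j‖ ^ 2 * ‖X i - X j‖ ^ (-α)
  have hsym := two_mul_sum_sum_erase_inner_eq_neg (fun i j => ‖X i - X j‖ ^ (-α))
    (fun i j => by rw [norm_sub_rev]) (fun i => G (X i, V i)) V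
  have hpair : ∀ i, ∀ j ∈ univ.erase i,
      |‖X i - X j‖ ^ (-α) * inner ℝ (G (X i, V i) - G (X j, V j)) (V i - V j)|
        ≤ K + ‖V i - V j‖ ^ 2 * ‖X i - X j‖ ^ (-α) := fun i j hj => by
    have hij : X i ≠ X j := hX.ne (ne_of_mem_erase hj).symm
    rw [abs_mul, abs_of_nonneg (Real.rpow_nonneg (norm_nonneg _) _)]
    exact rpow_neg_mul_abs_inner_le hG hij _ _ hα
      ((norm_sub_le _ _).trans (by linarith [hR i, hR j]))
  have hK : 0 ≤ K := by positivity
  have h2S : |2 * ∑ i, ∑ j ∈ univ.erase i,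
      ‖X i - X j‖ ^ (-α) * inner ℝ (G (X i, V i)) (V j - V i)| ≤ n ^ 2 * K + Q := by
    rw [hsym, abs_neg]
    calc _ ≤ ∑ i, ∑ j ∈ univ.erase i,
          |‖X i - X j‖ ^ (-α) * inner ℝ (G (X i, V i) - G (X j, V j)) (V i - V j)| :=
          (abs_sum_le_sum_abs _ _).trans (sum_le_sum fun i _ => abs_sum_le_sum_abs _ _)
      _ ≤ ∑ i, ∑ j ∈ univ.erase i, (K + ‖V i - V j‖ ^ 2 * ‖X i - X j‖ ^ (-α)) :=
          sum_le_sum fun i _ => sum_le_sum (hpair i)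
      _ ≤ n ^ 2 * K + Q := by
          simp only [sum_add_distrib]
          linarith [Finset.sum_sum_erase_const_le (ι := ι) hK]
  have hn : 0 ≤ n := Nat.cast_nonneg _
  calc _ = (n ^ 2)⁻¹ * |2 * ∑ i, ∑ j ∈ univ.erase i,
        ‖X i - X j‖ ^ (-α) * inner ℝ (G (X i, V i)) (V j - V i)| / 2 := by
        rw [abs_mul, abs_mul, abs_mul, abs_two, abs_inv, abs_of_nonneg hn]
        ring
    _ ≤ (n ^ 2)⁻¹ * (n ^ 2 * K + Q) / 2 := by gcongr
    _ = n ^ 2 / n ^ 2 * K / 2 + 1 / (2 * n ^ 2) * Q := by ring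
    _ ≤ (2 * R) ^ (2 - α) / 4 + 1 / (2 * n ^ 2) * Q := by
        have := mul_le_of_le_one_left hK (div_self_le_one (n ^ 2))
        linarith [show K / 2 = (2 * R) ^ (2 - α) / 4 by rw [hK_def]; ring]

end Interaction

theorem stmt16_general (d N : ℕ) (α T M : ℝ) (hα₂ : α ≤ 2)
    (hT : 0 < T) (hM : 0 < M)
    (x v : ℝ → Fin N → EuclideanSpace ℝ (Fin d))
    (hODE : ∀ t ∈ Icc (0:ℝ) T, ∀ i : Fin N,
      HasDerivWithinAt (fun s => x s i) (v t i) (Icc 0 T) t ∧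
      HasDerivWithinAt (fun s => v s i)
        ((N : ℝ)⁻¹ • ∑ j ∈ Finset.univ.erase i,
          ‖x t i - x t j‖ ^ (-α) • (v t j - v t i)) (Icc 0 T) t)
    (hnc : ∀ t ∈ Icc (0:ℝ) T, ∀ i j : Fin N, i ≠ j → x t i ≠ x t j)
    (hvb : ∀ t ∈ Icc (0:ℝ) T, ∀ i : Fin N, ‖v t i‖ ≤ M)
    (hxb : ∀ t ∈ Icc (0:ℝ) T, ∀ i : Fin N, ‖x t i‖ ≤ (T + 1) * M)
    (φ : Phase d → ℝ) (hφ : ContDiff ℝ 2 φ)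
    (hφ' : ∀ z : Phase d, ‖fderiv ℝ φ z‖ ≤ 1)
    (hφLip : LipschitzWith 1 (gradV φ)) :
    ∀ t ∈ Icc (0:ℝ) T, ∀ D : ℝ,
      HasDerivWithinAt (fun s => (N : ℝ)⁻¹ * ∑ i : Fin N, φ (x s i, v s i)) D (Icc 0 T) t →
      |D| ≤ M + (1/2) * (2 * (T + 1) * M) ^ (2 - α)
            + (1 / (2 * (N : ℝ)^2)) *
              ∑ i : Fin N, ∑ j ∈ Finset.univ.erase i,
                ‖v t i - v t j‖^2 * ‖x t i - x t j‖ ^ (-α) := by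
  intro t ht D hD
  have hφd : Differentiable ℝ φ := hφ.differentiable two_ne_zero
  set S := ∑ i : Fin N, ∑ j ∈ univ.erase i,
    ‖x t i - x t j‖ ^ (-α) * inner ℝ (gradV φ (x t i, v t i)) (v t j - v t i)
  have hD_eq : D = (N : ℝ)⁻¹ * ∑ i, fderiv ℝ φ (x t i, v t i) (v t i, 0)
      + (N : ℝ)⁻¹ * ((N : ℝ)⁻¹ * S) := by
    have hchain := (HasDerivWithinAt.fun_sum (u := univ) fun i _ =>
      (hφd _).hasFDerivAt.comp_hasDerivWithinAt t
        ((hODE t ht i).1.prodMk (hODE t ht i).2)).const_mul (N : ℝ)⁻¹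
    refine (uniqueDiffOn_Icc hT t ht).eq_deriv _ hD (hchain.congr_deriv ?_)
    rw [sum_congr rfl fun i _ => fderiv_apply_eq_add_inner_gradV (hφd _) _ _]
    simp only [inner_smul_right, inner_sum, sum_add_distrib, mul_add, ← mul_sum]
    rfl
  have htransport : |(N : ℝ)⁻¹ * ∑ i, fderiv ℝ φ (x t i, v t i) (v t i, 0)| ≤ M := by
    simpa using abs_inv_card_mul_sum_le hM.le fun i =>
      (ContinuousLinearMap.abs_apply_mk_zero_le _ _).trans
        ((mul_le_of_le_one_left (norm_nonneg _) (hφ' _)).trans (hvb t ht i))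
  have halignment := abs_mean_alignment_le hφLip
    (fun i j h => by_contra fun hij => hnc t ht i j hij h) (v t) hα₂ (by positivity) (hxb t ht)
  rw [Fintype.card_fin, ← mul_assoc 2 (T + 1) M] at halignment
  have hC : 0 ≤ (2 * (T + 1) * M) ^ (2 - α) := by positivity
  rw [hD_eq]
  calc _ ≤ _ := abs_add_le _ _
    _ ≤ _ := add_le_add htransport halignment
    _ ≤ _ := by linarith

/-- Derivative estimate along the singular Cucker–Smale flow: for a
`C²` observable `φ` with `‖φ‖_∞ ≤ 1`, `‖∇φ‖_∞ ≤ 1` and `∇ᵥφ` 1-Lipschitz, the time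
derivative of `(1/N) Σ φ(x_i, v_i)` is bounded by
`M + (1/2)(2(T+1)M)^{2-α} + (1/(2N²)) Σ_{i≠j} |v_i - v_j|² |x_i - x_j|^{-α}`. -/
theorem stmt16 (d N : ℕ) (hd : 1 ≤ d) (α T M : ℝ) (hα₀ : 0 < α) (hα₂ : α ≤ 2)
    (hT : 0 < T) (hM : 0 < M)
    (x v : ℝ → Fin N → EuclideanSpace ℝ (Fin d))
    (hx : ContDiffOn ℝ 1 x (Icc 0 T)) (hv : ContDiffOn ℝ 1 v (Icc 0 T))
    (hODE : ∀ t ∈ Icc (0:ℝ) T, ∀ i : Fin N,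
      HasDerivWithinAt (fun s => x s i) (v t i) (Icc 0 T) t ∧
      HasDerivWithinAt (fun s => v s i)
        ((N : ℝ)⁻¹ • ∑ j ∈ Finset.univ.erase i,
          ‖x t i - x t j‖ ^ (-α) • (v t j - v t i)) (Icc 0 T) t)
    (hnc : ∀ t ∈ Icc (0:ℝ) T, ∀ i j : Fin N, i ≠ j → x t i ≠ x t j)
    (hvb : ∀ t ∈ Icc (0:ℝ) T, ∀ i : Fin N, ‖v t i‖ ≤ M)
    (hxb : ∀ t ∈ Icc (0:ℝ) T, ∀ i : Fin N, ‖x t i‖ ≤ (T + 1) * M)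
    (φ : Phase d → ℝ) (hφ : ContDiff ℝ 2 φ)
    (hφbd : ∀ z : Phase d, |φ z| ≤ 1)
    (hφ' : ∀ z : Phase d, ‖fderiv ℝ φ z‖ ≤ 1)
    (hφLip : LipschitzWith 1 (gradV φ)) :
    ∀ t ∈ Icc (0:ℝ) T, ∀ D : ℝ,
      HasDerivWithinAt (fun s => (N : ℝ)⁻¹ * ∑ i : Fin N, φ (x s i, v s i)) D (Icc 0 T) t →
      |D| ≤ M + (1/2) * (2 * (T + 1) * M) ^ (2 - α)
            + (1 / (2 * (N : ℝ)^2)) *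
              ∑ i : Fin N, ∑ j ∈ Finset.univ.erase i,
                ‖v t i - v t j‖^2 * ‖x t i - x t j‖ ^ (-α) :=
  stmt16_general d N α T M hα₂ hT hM x v hODE hnc hvb hxb φ hφ hφ' hφLip

end
end
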